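/- arXiv:2209.13854 — 2 statements merged into one kernel-verified Lean document; each statement's English description precedes it below -/
import Mathlib

section
/- For every complex number z, |cos(|z|)| ≤ |cos(z)| ≤ cosh(|z|). -/
/-!
Writing `z = x + iy` and `r = |z|`, one has `|cos z|² = cos² x + sinh² y`. The upper bound follows
from `cos² x ≤ 1` and `|y| ≤ r`, since `1 + sinh² r = cosh² r`. For the lower bound,
`cos² r - cos² x = sin² x - sin² r = sin (x + r) sin (x - r)`, which `|sin t| ≤ |t|` bounds by
`r² - x² = y² ≤ sinh² y`.
-/

namespace Real

theorem sin_sq_sub_sin_sq (a b : ℝ) : sin a ^ 2 - sin b ^ 2 = sin (a + b) * sin (a - b) := by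
  rw [sin_add, sin_sub]
  linear_combination sin b ^ 2 * sin_sq_add_cos_sq a - sin a ^ 2 * sin_sq_add_cos_sq b

theorem sin_sq_sub_sin_sq_le (a b : ℝ) : sin a ^ 2 - sin b ^ 2 ≤ |a ^ 2 - b ^ 2| :=
  calc sin a ^ 2 - sin b ^ 2 ≤ |sin (a + b)| * |sin (a - b)| := by
        rw [sin_sq_sub_sin_sq, ← abs_mul]; exact le_abs_self _
    _ ≤ |a + b| * |a - b| := mul_le_mul abs_sin_le_abs abs_sin_le_abs (abs_nonneg _) (abs_nonneg _)
    _ = |a ^ 2 - b ^ 2| := by rw [← abs_mul]; ring_nf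

theorem sinh_sq_le_sinh_sq {x y : ℝ} (h : |x| ≤ |y|) : sinh x ^ 2 ≤ sinh y ^ 2 := by
  rw [sq_le_sq, abs_sinh, abs_sinh]
  exact sinh_le_sinh.mpr h

theorem sq_le_sinh_sq (x : ℝ) : x ^ 2 ≤ sinh x ^ 2 := by
  rw [sq_le_sq, abs_sinh]
  exact self_le_sinh_iff.mpr (abs_nonneg x)

end Real

namespace Complex

theorem norm_cos_sq (z : ℂ) : ‖cos z‖ ^ 2 = Real.cos z.re ^ 2 + Real.sinh z.im ^ 2 := by
  rw [Complex.sq_norm, normSq_apply, cos_eq]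
  simp only [sub_re, sub_im, mul_re, mul_im, I_re, I_im, cos_ofReal_re, cosh_ofReal_re,
    sin_ofReal_re, sinh_ofReal_re, cos_ofReal_im, cosh_ofReal_im, sin_ofReal_im, sinh_ofReal_im]
  linear_combination Real.cos z.re ^ 2 * Real.cosh_sq z.im
    + Real.sinh z.im ^ 2 * Real.sin_sq_add_cos_sq z.re

theorem norm_cos_le_cosh_norm (z : ℂ) : ‖cos z‖ ≤ Real.cosh ‖z‖ := by
  refine abs_le_of_sq_le_sq' ?_ (Real.cosh_pos _).le |>.2
  have hy : Real.sinh z.im ^ 2 ≤ Real.sinh ‖z‖ ^ 2 :=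
    Real.sinh_sq_le_sinh_sq ((abs_im_le_norm z).trans (le_abs_self _))
  rw [norm_cos_sq, Real.cosh_sq']
  linarith [Real.cos_sq_le_one z.re]

theorem cos_norm_sq_le_norm_cos_sq (z : ℂ) : Real.cos ‖z‖ ^ 2 ≤ ‖cos z‖ ^ 2 := by
  have hr : ‖z‖ ^ 2 = z.re ^ 2 + z.im ^ 2 := by rw [Complex.sq_norm, normSq_apply]; ring
  have hsin : Real.sin z.re ^ 2 - Real.sin ‖z‖ ^ 2 ≤ z.im ^ 2 := by
    simpa [hr] using Real.sin_sq_sub_sin_sq_le z.re ‖z‖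
  rw [norm_cos_sq, Real.cos_sq', Real.cos_sq' z.re]
  linarith [Real.sq_le_sinh_sq z.im]

end Complex

/-- For every complex number `z`, `|cos(|z|)| ≤ |cos z| ≤ cosh(|z|)`. -/
theorem abs_cos_le_abs_complex_cos_le_cosh (z : ℂ) :
    |Real.cos ‖z‖| ≤ ‖Complex.cos z‖ ∧
      ‖Complex.cos z‖ ≤ Real.cosh ‖z‖ :=
  ⟨abs_le_of_sq_le_sq (Complex.cos_norm_sq_le_norm_cos_sq z) (norm_nonneg _),
    Complex.norm_cos_le_cosh_norm z⟩
end

section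
/- For s = σ + iτ with σ < 0 and τ ≠ 0, |Γ_ℂ(1-s)/Γ_ℂ(s)| ≥ (2π)^{2σ-1} Γ(1-σ)² |τ|. -/
open Real Complex

/-- `Γ_ℝ(s) = π^{-s/2} Γ(s/2)`. -/
noncomputable def GammaR (s : ℂ) : ℂ := (Real.pi : ℂ) ^ (-s / 2) * Complex.Gamma (s / 2)

/-- `Γ_ℂ(s) = 2 (2π)^{-s} Γ(s)`. -/
noncomputable def GammaC (s : ℂ) : ℂ := 2 * (2 * Real.pi : ℂ) ^ (-s) * Complex.Gamma s

/-- `γ_ℝ(s) = |Γ_ℝ(1-s)/Γ_ℝ(s)|`. -/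
noncomputable def gammaRFactor (s : ℂ) : ℝ := ‖GammaR (1 - s) / GammaR s‖

/-- `γ_ℂ(s) = |Γ_ℂ(1-s)/Γ_ℂ(s)|^{1/2}`. -/
noncomputable def gammaCFactor (s : ℂ) : ℝ := Real.sqrt ‖GammaC (1 - s) / GammaC s‖

/-- `Γ_m(s) = min {γ_ℝ(s), γ_ℂ(s)}`. -/
noncomputable def GammaMin (s : ℂ) : ℝ := min (gammaRFactor s) (gammaCFactor s)

/-!
By the reflection formula `Γ(1-s)/Γ(s) = Γ(1-s)² sin(πs)/π`, so up to the factor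
`(2π)^{2σ-1}` the ratio of the `Γ_ℂ` is `|Γ(1-s)|² |sin(πs)|/π`, and `|sin(πs)| ≥ |sinh(πτ)|`.
Euler's limit formula `Γ(z) = lim n^z n!/∏_{j ≤ n} (z+j)` shows that `|Γ(x+iy)|/Γ(x)`
increases with `x > 0`, factor by factor, so `1-σ ≥ 1` gives `|Γ(1-s)| ≥ Γ(1-σ) |Γ(1-iτ)|`;
finally `|Γ(1-iτ)|² |sinh(πτ)| = π|τ|` by reflection once more.
-/

open Filter Topology ComplexConjugate

namespace Complex

lemma abs_sinh_im_le_norm_sin (z : ℂ) : |Real.sinh z.im| ≤ ‖sin z‖ := by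
  have h : sin z = ((Real.sin z.re * Real.cosh z.im : ℝ) : ℂ)
      + ((Real.cos z.re * Real.sinh z.im : ℝ) : ℂ) * I := by
    rw [sin_eq]
    push_cast
    ring
  rw [h, norm_add_mul_I, ← Real.sqrt_sq_eq_abs]
  apply Real.sqrt_le_sqrt
  nlinarith [Real.sin_sq_add_cos_sq z.re, Real.cosh_sq z.im, sq_nonneg (Real.sin z.re),
    sq_nonneg (Real.sinh z.im)]

lemma norm_Gamma_one_add_mul_I_sq_mul_sinh (y : ℝ) :
    ‖Gamma (1 + y * I)‖ ^ 2 * Real.sinh (π * y) = π * y := by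
  rcases eq_or_ne y 0 with rfl | hy
  · simp
  have hyI : (y : ℂ) * I ≠ 0 := by simp [hy]
  have hconj : Gamma (1 - y * I) = conj (Gamma (1 + y * I)) := by
    rw [← Gamma_conj]
    simp [sub_eq_add_neg]
  have hsin : sin (π * (y * I)) = Real.sinh (π * y) * I := by
    rw [← mul_assoc, ← ofReal_mul, sin_mul_I, ofReal_sinh]
  have hsinh : (Real.sinh (π * y) : ℂ) ≠ 0 := by
    exact_mod_cast Real.sinh_ne_zero.2 (mul_ne_zero Real.pi_ne_zero hy)
  have key : Gamma (1 + y * I) * conj (Gamma (1 + y * I)) * Real.sinh (π * y) = π * y := by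
    rw [← hconj, add_comm, Gamma_add_one _ hyI, mul_assoc (↑y * I), Gamma_mul_Gamma_one_sub, hsin]
    field_simp
  rw [mul_conj, normSq_eq_norm_sq] at key
  exact_mod_cast key

lemma re_mul_norm_le_norm_mul_re {z w : ℂ} (hz : 0 < z.re) (hzw : z.re ≤ w.re)
    (him : z.im = w.im) : z.re * ‖w‖ ≤ ‖z‖ * w.re := by
  have hw : 0 < w.re := hz.trans_le hzw
  refine le_of_pow_le_pow_left₀ two_ne_zero (by positivity) ?_
  rw [mul_pow, mul_pow, Complex.sq_norm, Complex.sq_norm, normSq_apply, normSq_apply, him]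
  nlinarith [mul_le_mul hzw hzw hz.le hw.le, sq_nonneg w.im]

lemma norm_GammaSeq (z : ℂ) {n : ℕ} (hn : n ≠ 0) :
    ‖GammaSeq z n‖ = (n : ℝ) ^ z.re * n.factorial / ∏ j ∈ Finset.range (n + 1), ‖z + j‖ := by
  rw [GammaSeq, norm_div, norm_mul, norm_prod, ← ofReal_natCast,
    norm_cpow_eq_rpow_re_of_pos (by positivity)]
  simp

lemma norm_GammaSeq_mul_GammaSeq_re_le {z w : ℂ} (hz : 0 < z.re) (hzw : z.re ≤ w.re)
    (him : z.im = w.im) {n : ℕ} (hn : n ≠ 0) :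
    ‖GammaSeq z n‖ * ‖GammaSeq w.re n‖ ≤ ‖GammaSeq z.re n‖ * ‖GammaSeq w n‖ := by
  simp only [norm_GammaSeq _ hn, ofReal_re, div_mul_div_comm]
  have hre (x : ℝ) (hx : 0 < x) (j : ℕ) : ‖(x : ℂ) + j‖ = x + j := by
    rw [← ofReal_natCast, ← ofReal_add, norm_real, Real.norm_of_nonneg (by positivity)]
  have hpos (u : ℂ) (hu : 0 < u.re) (j : ℕ) : 0 < ‖u + j‖ :=
    (by simp; positivity : 0 < (u + j).re).trans_le (re_le_norm _)
  refine div_le_div_of_nonneg_left (by positivity) ?_ ?_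
  · exact mul_pos (Finset.prod_pos fun j _ => hpos _ (by simpa using hz) j)
      (Finset.prod_pos fun j _ => hpos _ (hz.trans_le hzw) j)
  · rw [← Finset.prod_mul_distrib, ← Finset.prod_mul_distrib]
    refine Finset.prod_le_prod (fun j _ => by positivity) fun j _ => ?_
    rw [hre _ hz, hre _ (hz.trans_le hzw)]
    simpa using re_mul_norm_le_norm_mul_re (z := z + j) (w := w + j)
      (by simp; positivity) (by simpa using hzw) (by simpa using him)

lemma norm_Gamma_mul_Gamma_re_le {z w : ℂ} (hz : 0 < z.re) (hzw : z.re ≤ w.re)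
    (him : z.im = w.im) : ‖Gamma z‖ * Real.Gamma w.re ≤ Real.Gamma z.re * ‖Gamma w‖ := by
  have hlim (x : ℝ) (hx : 0 < x) :
      Tendsto (fun n => ‖GammaSeq x n‖) atTop (𝓝 (Real.Gamma x)) := by
    simpa [Gamma_ofReal, abs_of_pos (Real.Gamma_pos_of_pos hx)] using
      (GammaSeq_tendsto_Gamma (x : ℂ)).norm
  refine le_of_tendsto_of_tendsto
    ((GammaSeq_tendsto_Gamma z).norm.mul (hlim _ (hz.trans_le hzw)))
    ((hlim _ hz).mul (GammaSeq_tendsto_Gamma w).norm) ?_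
  filter_upwards [eventually_ne_atTop 0] with n hn
  exact norm_GammaSeq_mul_GammaSeq_re_le hz hzw him hn

lemma Gamma_one_sub_div_Gamma {s : ℂ} (hs : sin (π * s) ≠ 0) :
    Gamma (1 - s) / Gamma s = Gamma (1 - s) ^ 2 * sin (π * s) / π := by
  have hrefl := Gamma_mul_Gamma_one_sub s
  have hΓ : Gamma s ≠ 0 :=
    left_ne_zero_of_mul (hrefl ▸ div_ne_zero (ofReal_ne_zero.2 Real.pi_ne_zero) hs)
  rw [eq_div_iff hs] at hrefl
  rw [div_eq_div_iff hΓ (ofReal_ne_zero.2 Real.pi_ne_zero)]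
  linear_combination -Gamma (1 - s) * hrefl

end Complex

lemma norm_GammaC (s : ℂ) : ‖GammaC s‖ = 2 * (2 * π) ^ (-s.re) * ‖Complex.Gamma s‖ := by
  rw [GammaC, norm_mul, norm_mul, ← Complex.ofReal_ofNat, ← Complex.ofReal_mul,
    Complex.norm_cpow_eq_rpow_re_of_pos (by positivity)]
  simp

lemma norm_GammaC_one_sub_div (s : ℂ) :
    ‖GammaC (1 - s) / GammaC s‖ =
      (2 * π) ^ (2 * s.re - 1) * ‖Complex.Gamma (1 - s) / Complex.Gamma s‖ := by
  rw [norm_div, norm_div, norm_GammaC, norm_GammaC,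
    show 2 * s.re - 1 = -(1 - s).re - -s.re by simp; ring, Real.rpow_sub (by positivity)]
  field_simp

/-- For `s = σ + iτ` with `σ < 0` and `τ ≠ 0`,
`|Γ_ℂ(1-s)/Γ_ℂ(s)| ≥ (2π)^{2σ-1} Γ(1-σ)² |τ|`. -/
theorem abs_GammaC_ratio_lower_bound (σ τ : ℝ) (hσ : σ < 0) (hτ : τ ≠ 0) :
    (2 * Real.pi) ^ (2 * σ - 1) * Real.Gamma (1 - σ) ^ 2 * |τ| ≤
      ‖GammaC (1 - (σ + τ * Complex.I)) / GammaC (σ + τ * Complex.I)‖ := by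
  set s : ℂ := σ + τ * Complex.I
  have hsinh : 0 < |Real.sinh (π * τ)| :=
    abs_pos.2 (Real.sinh_ne_zero.2 (mul_ne_zero Real.pi_ne_zero hτ))
  have hsin : |Real.sinh (π * τ)| ≤ ‖Complex.sin (π * s)‖ := by
    simpa [s] using Complex.abs_sinh_im_le_norm_sin (π * s)
  have hvert : ‖Complex.Gamma (1 - τ * Complex.I)‖ ^ 2 * |Real.sinh (π * τ)| = π * |τ| := by
    have h := congrArg abs (Complex.norm_Gamma_one_add_mul_I_sq_mul_sinh (-τ))
    simpa [abs_mul, abs_of_pos Real.pi_pos, ← sub_eq_add_neg] using h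
  have hmono : ‖Complex.Gamma (1 - τ * Complex.I)‖ * Real.Gamma (1 - σ) ≤
      ‖Complex.Gamma (1 - s)‖ := by
    simpa [s] using Complex.norm_Gamma_mul_Gamma_re_le (z := 1 - τ * Complex.I) (w := 1 - s)
      (by simp) (by simp [s]; linarith) (by simp [s])
  rw [norm_GammaC_one_sub_div, Complex.Gamma_one_sub_div_Gamma
    (norm_pos_iff.1 (hsinh.trans_le hsin)), norm_div, norm_mul, norm_pow,
    Complex.norm_real, Real.norm_of_nonneg Real.pi_pos.le]
  have hre : s.re = σ := by simp [s]
  rw [hre, mul_assoc]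
  refine mul_le_mul_of_nonneg_left ?_ (by positivity)
  have hΓ : 0 < Real.Gamma (1 - σ) := Real.Gamma_pos_of_pos (by linarith)
  calc Real.Gamma (1 - σ) ^ 2 * |τ|
      = (‖Complex.Gamma (1 - τ * Complex.I)‖ * Real.Gamma (1 - σ)) ^ 2 *
          |Real.sinh (π * τ)| / π := by
        rw [mul_pow, mul_right_comm, hvert]
        field_simp
    _ ≤ ‖Complex.Gamma (1 - s)‖ ^ 2 * ‖Complex.sin (π * s)‖ / π := by gcongr
end
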